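/- arXiv:2106.03123 — 4 statements merged into one kernel-verified Lean document; each statement's English description precedes it below -/
import Mathlib

section
/- Let E be a real inner product space, let K ⊆ E be an additive subgroup with −K = K such that ∑_{v ∈ K} exp(−π‖v‖²) converges, let s > 0, and let σ₁, …, σ_k ∈ E satisfy ‖σᵢ‖ ≤ s for all i and the independence condition that for λ = (λ₁,…,λ_k) ∈ ℤ^k, λ₁σ₁ + ⋯ + λ_kσ_k ∈ K implies λ = 0. Then for every positive integer M, ∑_{u ∈ K + ℤσ₁ + ⋯ + ℤσ_k} exp(−π‖u‖²) ≥ (2M+1)^k · exp(−π k² M² s²) · ∑_{v ∈ K} exp(−π‖v‖²), where the left-hand sum is taken in [0, ∞]. -/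
open scoped ENNReal
open Real

lemma pointwise_gauss_ineq {E : Type*} [NormedAddCommGroup E] [InnerProductSpace ℝ E] (w v : E) :
    2 * (Real.exp (-π * ‖w‖ ^ 2) * Real.exp (-π * ‖v‖ ^ 2)) ≤
      Real.exp (-π * ‖w + v‖ ^ 2) + Real.exp (-π * ‖w - v‖ ^ 2) := by
  have h1 : ‖w + v‖ ^ 2 = ‖w‖ ^ 2 + 2 * inner ℝ w v + ‖v‖ ^ 2 := by
    rw [← norm_add_sq_real]
  have h2 : ‖w - v‖ ^ 2 = ‖w‖ ^ 2 - 2 * inner ℝ w v + ‖v‖ ^ 2 := by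
    rw [← norm_sub_sq_real]
  set a := Real.exp (-π * ‖w + v‖ ^ 2) with ha'
  set b := Real.exp (-π * ‖w - v‖ ^ 2) with hb'
  set p := Real.exp (-π * ‖w‖ ^ 2) * Real.exp (-π * ‖v‖ ^ 2) with hp'
  have hab : a * b = p * p := by
    rw [ha', hb', hp']
    simp only [← Real.exp_add]
    congr 1
    rw [h1, h2]; ring
  have ha : 0 < a := Real.exp_pos _
  have hp : 0 < p := mul_pos (Real.exp_pos _) (Real.exp_pos _)
  nlinarith [sq_nonneg (a - p)]

lemma gauss_translate_bound {E : Type*} [NormedAddCommGroup E] [InnerProductSpace ℝ E]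
    (K : AddSubgroup E) (w : E) :
    ENNReal.ofReal (Real.exp (-π * ‖w‖ ^ 2)) *
        ∑' v : K, ENNReal.ofReal (Real.exp (-π * ‖(v : E)‖ ^ 2)) ≤
      ∑' v : K, ENNReal.ofReal (Real.exp (-π * ‖w + (v : E)‖ ^ 2)) := by
  set S := ∑' v : K, ENNReal.ofReal (Real.exp (-π * ‖w + (v : E)‖ ^ 2)) with hS
  have hsym : S = ∑' v : K, ENNReal.ofReal (Real.exp (-π * ‖w - (v : E)‖ ^ 2)) := by
    rw [hS, ← (Equiv.neg K).tsum_eq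
      (fun v : K => ENNReal.ofReal (Real.exp (-π * ‖w - (v : E)‖ ^ 2)))]
    simp [sub_eq_add_neg]
  have h2S : 2 * (ENNReal.ofReal (Real.exp (-π * ‖w‖ ^ 2)) *
      ∑' v : K, ENNReal.ofReal (Real.exp (-π * ‖(v : E)‖ ^ 2))) ≤ 2 * S := by
    calc 2 * (ENNReal.ofReal (Real.exp (-π * ‖w‖ ^ 2)) *
          ∑' v : K, ENNReal.ofReal (Real.exp (-π * ‖(v : E)‖ ^ 2)))
        = ∑' v : K, 2 * (ENNReal.ofReal (Real.exp (-π * ‖w‖ ^ 2)) *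
            ENNReal.ofReal (Real.exp (-π * ‖(v : E)‖ ^ 2))) := by
          rw [ENNReal.tsum_mul_left, ENNReal.tsum_mul_left]
      _ ≤ ∑' v : K, (ENNReal.ofReal (Real.exp (-π * ‖w + (v : E)‖ ^ 2)) +
            ENNReal.ofReal (Real.exp (-π * ‖w - (v : E)‖ ^ 2))) := by
          refine ENNReal.tsum_le_tsum fun v => ?_
          have := pointwise_gauss_ineq w (v : E)
          calc 2 * (ENNReal.ofReal (Real.exp (-π * ‖w‖ ^ 2)) *
                ENNReal.ofReal (Real.exp (-π * ‖(v : E)‖ ^ 2)))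
              = ENNReal.ofReal (2 * (Real.exp (-π * ‖w‖ ^ 2) *
                  Real.exp (-π * ‖(v : E)‖ ^ 2))) := by
                rw [ENNReal.ofReal_mul (by norm_num), ENNReal.ofReal_mul (Real.exp_pos _).le]
                norm_num
            _ ≤ ENNReal.ofReal (Real.exp (-π * ‖w + (v : E)‖ ^ 2) +
                  Real.exp (-π * ‖w - (v : E)‖ ^ 2)) := ENNReal.ofReal_le_ofReal this
            _ = _ := ENNReal.ofReal_add (Real.exp_pos _).le (Real.exp_pos _).le
      _ = S + S := by rw [ENNReal.tsum_add, ← hS, ← hsym]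
      _ = 2 * S := by ring
  exact (ENNReal.mul_le_mul_iff_right (by norm_num) (by norm_num)).mp h2S

/-- Lower bound for the Gaussian mass of the subgroup generated by a symmetric subgroup `K`
and independent short vectors `σ₁, …, σ_k`. -/
theorem theta_subgroup_plus_short_vectors
    {E : Type*} [NormedAddCommGroup E] [InnerProductSpace ℝ E]
    (K : AddSubgroup E)
    (hK : ∑' v : K, ENNReal.ofReal (Real.exp (-π * ‖(v : E)‖ ^ 2)) ≠ ⊤)
    (s : ℝ) (hs : 0 < s) {k : ℕ} (σ : Fin k → E) (hσ : ∀ i, ‖σ i‖ ≤ s)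
    (hind : ∀ lam : Fin k → ℤ, (∑ i, lam i • σ i) ∈ K → lam = 0)
    (M : ℕ) (hM : 0 < M) :
    ((2 * M + 1 : ℕ) : ℝ≥0∞) ^ k *
        ENNReal.ofReal (Real.exp (-(π * (k : ℝ) ^ 2 * (M : ℝ) ^ 2 * s ^ 2))) *
        ∑' v : K, ENNReal.ofReal (Real.exp (-π * ‖(v : E)‖ ^ 2)) ≤
      ∑' u : (K ⊔ AddSubgroup.closure (Set.range σ) : AddSubgroup E),
        ENNReal.ofReal (Real.exp (-π * ‖(u : E)‖ ^ 2)) := by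
  classical
  set L : AddSubgroup E := K ⊔ AddSubgroup.closure (Set.range σ) with hL
  set T := ∑' v : K, ENNReal.ofReal (Real.exp (-π * ‖(v : E)‖ ^ 2)) with hT
  set c := ENNReal.ofReal (Real.exp (-(π * (k : ℝ) ^ 2 * (M : ℝ) ^ 2 * s ^ 2))) with hc
  set w : (Fin k → ℤ) → E := fun lam => ∑ i, lam i • σ i with hw
  set B : Finset (Fin k → ℤ) :=
    Fintype.piFinset (fun _ : Fin k => Finset.Icc (-(M : ℤ)) (M : ℤ)) with hB
  -- membership
  have hwL : ∀ lam : Fin k → ℤ, w lam ∈ L := by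
    intro lam
    refine AddSubgroup.sum_mem _ fun i _ => AddSubgroup.zsmul_mem _ ?_ _
    exact le_sup_right (α := AddSubgroup E)
      (AddSubgroup.subset_closure (Set.mem_range_self i))
  have hmem : ∀ (lam : Fin k → ℤ) (v : K), w lam + (v : E) ∈ L :=
    fun lam v => L.add_mem (hwL lam) (le_sup_left (α := AddSubgroup E) v.2)
  -- the injection
  set φ : (B × K) → L := fun p => ⟨w (p.1 : Fin k → ℤ) + (p.2 : E), hmem _ _⟩ with hφ
  have hφinj : Function.Injective φ := by
    rintro ⟨⟨lam, hlam⟩, v⟩ ⟨⟨lam', hlam'⟩, v'⟩ h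
    have heq : w lam + (v : E) = w lam' + (v' : E) := congrArg Subtype.val h
    have hsub : w lam - w lam' = (v' : E) - (v : E) := by
      rw [sub_eq_sub_iff_add_eq_add, heq, add_comm]
    have hsum : (∑ i, (lam - lam') i • σ i) = (v' : E) - (v : E) := by
      rw [← hsub, hw]
      simp [sub_smul, Finset.sum_sub_distrib]
    have hKm : (∑ i, (lam - lam') i • σ i) ∈ K := by
      rw [hsum]; exact K.sub_mem v'.2 v.2
    have h0 : lam - lam' = 0 := hind _ hKm
    have hll : lam = lam' := by
      funext i; have := congrFun h0 i; simpa [sub_eq_zero] using this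
    subst hll
    have hv : (v : E) = (v' : E) := by
      have := heq; simpa using this
    simp [Subtype.ext (Subtype.ext_iff.mp (Subtype.ext hv))]
  -- norm bound on w lam for lam in the box
  have hnorm : ∀ lam ∈ B, c ≤ ENNReal.ofReal (Real.exp (-π * ‖w lam‖ ^ 2)) := by
    intro lam hlam
    have hbd : ‖w lam‖ ≤ (k : ℝ) * (M : ℝ) * s := by
      calc ‖w lam‖ ≤ ∑ i, ‖lam i • σ i‖ := norm_sum_le _ _
        _ ≤ ∑ i : Fin k, (M : ℝ) * s := by
            refine Finset.sum_le_sum fun i _ => ?_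
            have hli : lam i ∈ Finset.Icc (-(M : ℤ)) (M : ℤ) := by
              rw [hB] at hlam
              exact Fintype.mem_piFinset.mp hlam i
            have habs : |lam i| ≤ (M : ℤ) := by
              rw [abs_le]; exact Finset.mem_Icc.mp hli
            have h1 : ‖lam i • σ i‖ = |(lam i : ℝ)| * ‖σ i‖ := by
              rw [← Int.cast_smul_eq_zsmul ℝ, norm_smul, Real.norm_eq_abs]
            rw [h1]
            have h2 : |(lam i : ℝ)| ≤ (M : ℝ) := by
              rw [← Int.cast_abs]; exact_mod_cast habs
            exact mul_le_mul h2 (hσ i) (norm_nonneg _) (Nat.cast_nonneg M)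
        _ = (k : ℝ) * (M : ℝ) * s := by
            rw [Finset.sum_const, Finset.card_univ, Fintype.card_fin, nsmul_eq_mul]; ring
    refine ENNReal.ofReal_le_ofReal (Real.exp_le_exp.mpr ?_)
    have hsq : ‖w lam‖ ^ 2 ≤ ((k : ℝ) * (M : ℝ) * s) ^ 2 := by
      have h0 : (0:ℝ) ≤ ‖w lam‖ := norm_nonneg _
      nlinarith
    nlinarith [Real.pi_pos, hsq]
  -- assemble
  calc ((2 * M + 1 : ℕ) : ℝ≥0∞) ^ k * c * T
      = ∑ _lam ∈ B, c * T := by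
        rw [Finset.sum_const, nsmul_eq_mul]
        have hcard : B.card = (2 * M + 1) ^ k := by
          rw [hB, Fintype.card_piFinset]
          simp only [Int.card_Icc]
          rw [Finset.prod_const, Finset.card_univ, Fintype.card_fin]
          congr 1
          omega
        rw [hcard, mul_assoc]
        push_cast
        ring
    _ ≤ ∑ lam ∈ B, ∑' v : K, ENNReal.ofReal (Real.exp (-π * ‖w lam + (v : E)‖ ^ 2)) := by
        refine Finset.sum_le_sum fun lam hlam => ?_
        calc c * T ≤ ENNReal.ofReal (Real.exp (-π * ‖w lam‖ ^ 2)) * T :=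
              mul_le_mul_left (hnorm lam hlam) T
          _ ≤ _ := gauss_translate_bound K (w lam)
    _ = ∑' p : (B × K), ENNReal.ofReal (Real.exp (-π * ‖(φ p : E)‖ ^ 2)) := by
        rw [← Finset.tsum_subtype B
          (fun lam => ∑' v : K, ENNReal.ofReal (Real.exp (-π * ‖w lam + (v : E)‖ ^ 2)))]
        exact (ENNReal.tsum_prod (f := fun (lam : {x // x ∈ B}) (v : K) =>
          ENNReal.ofReal (Real.exp (-π * ‖w (lam : Fin k → ℤ) + (v : E)‖ ^ 2)))).symm
    _ ≤ ∑' u : L, ENNReal.ofReal (Real.exp (-π * ‖(u : E)‖ ^ 2)) :=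
        ENNReal.tsum_comp_le_tsum_of_injective hφinj
          (fun u : L => ENNReal.ofReal (Real.exp (-π * ‖(u : E)‖ ^ 2)))
end

section
/- Let E be a real inner product space and let K ⊆ E be an additive subgroup with −K = K. Then for every x ∈ E, ∑_{v ∈ K} exp(−π‖v + x‖²) ≥ exp(−π‖x‖²) · ∑_{v ∈ K} exp(−π‖v‖²), where both sums are taken in [0, ∞]. -/
open scoped ENNReal
open Real

/-- Pointwise AM–GM + parallelogram inequality. -/
lemma exp_add_exp_ge {E : Type*} [NormedAddCommGroup E] [InnerProductSpace ℝ E]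
    (v x : E) :
    Real.exp (-π * ‖v + x‖ ^ 2) + Real.exp (-π * ‖v - x‖ ^ 2) ≥
      2 * (Real.exp (-π * ‖x‖ ^ 2) * Real.exp (-π * ‖v‖ ^ 2)) := by
  have hpar : ‖v + x‖ * ‖v + x‖ + ‖v - x‖ * ‖v - x‖ =
      2 * (‖v‖ * ‖v‖ + ‖x‖ * ‖x‖) := by simpa [sq] using parallelogram_law_with_norm ℝ v x
  have hpar' : ‖v + x‖ ^ 2 + ‖v - x‖ ^ 2 = 2 * (‖v‖ ^ 2 + ‖x‖ ^ 2) := by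
    simpa [sq] using hpar
  have key : 2 * Real.exp ((-π * ‖v + x‖ ^ 2) / 2) * Real.exp ((-π * ‖v - x‖ ^ 2) / 2) ≤
      Real.exp ((-π * ‖v + x‖ ^ 2) / 2) ^ 2 + Real.exp ((-π * ‖v - x‖ ^ 2) / 2) ^ 2 :=
    two_mul_le_add_sq _ _
  have h1 : Real.exp ((-π * ‖v + x‖ ^ 2) / 2) ^ 2 = Real.exp (-π * ‖v + x‖ ^ 2) := by
    rw [sq, ← Real.exp_add]; ring_nf
  have h2 : Real.exp ((-π * ‖v - x‖ ^ 2) / 2) ^ 2 = Real.exp (-π * ‖v - x‖ ^ 2) := by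
    rw [sq, ← Real.exp_add]; ring_nf
  have h3 : Real.exp ((-π * ‖v + x‖ ^ 2) / 2) * Real.exp ((-π * ‖v - x‖ ^ 2) / 2) =
      Real.exp (-π * ‖x‖ ^ 2) * Real.exp (-π * ‖v‖ ^ 2) := by
    rw [← Real.exp_add, ← Real.exp_add]
    congr 1
    have : -π * ‖v + x‖ ^ 2 + -π * ‖v - x‖ ^ 2 = -π * (2 * (‖v‖ ^ 2 + ‖x‖ ^ 2)) := by
      rw [← hpar']; ring
    linarith [this]
  calc 2 * (Real.exp (-π * ‖x‖ ^ 2) * Real.exp (-π * ‖v‖ ^ 2))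
      = 2 * Real.exp ((-π * ‖v + x‖ ^ 2) / 2) * Real.exp ((-π * ‖v - x‖ ^ 2) / 2) := by
        rw [mul_assoc, h3]
    _ ≤ _ := by rw [← h1, ← h2]; exact key

/-- The shifted Gaussian sum over a symmetric additive subgroup is at least
`exp(−π‖x‖²)` times the unshifted sum. -/
theorem theta_shift_lower_bound
    {E : Type*} [NormedAddCommGroup E] [InnerProductSpace ℝ E]
    (K : AddSubgroup E) (x : E) :
    ∑' v : K, ENNReal.ofReal (Real.exp (-π * ‖(v : E) + x‖ ^ 2)) ≥
      ENNReal.ofReal (Real.exp (-π * ‖x‖ ^ 2)) *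
        ∑' v : K, ENNReal.ofReal (Real.exp (-π * ‖(v : E)‖ ^ 2)) := by
  set f : K → ℝ≥0∞ := fun v => ENNReal.ofReal (Real.exp (-π * ‖(v : E) + x‖ ^ 2)) with hf
  set g : K → ℝ≥0∞ := fun v => ENNReal.ofReal (Real.exp (-π * ‖(v : E) - x‖ ^ 2)) with hg
  set c : ℝ≥0∞ := ENNReal.ofReal (Real.exp (-π * ‖x‖ ^ 2)) with hc
  set h : K → ℝ≥0∞ := fun v => ENNReal.ofReal (Real.exp (-π * ‖(v : E)‖ ^ 2)) with hh
  have hfg : ∑' v, g v = ∑' v, f v := by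
    refine (Equiv.tsum_eq (Equiv.neg K) g).symm.trans (tsum_congr fun v => ?_)
    have : ‖(-(v : E)) - x‖ = ‖(v : E) + x‖ := by
      rw [← norm_neg]; congr 1; abel
    simp [f, g, this]
  have hpt : ∀ v : K, 2 * (c * h v) ≤ f v + g v := by
    intro v
    have := exp_add_exp_ge (E := E) (v : E) x
    calc 2 * (c * h v)
        = ENNReal.ofReal (2 * (Real.exp (-π * ‖x‖ ^ 2) * Real.exp (-π * ‖(v : E)‖ ^ 2))) := by
          rw [ENNReal.ofReal_mul (by norm_num), ENNReal.ofReal_mul (Real.exp_pos _).le]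
          norm_num [c, h]
      _ ≤ ENNReal.ofReal (Real.exp (-π * ‖(v : E) + x‖ ^ 2) + Real.exp (-π * ‖(v : E) - x‖ ^ 2)) :=
          ENNReal.ofReal_le_ofReal this
      _ = f v + g v := ENNReal.ofReal_add (by positivity) (by positivity)
  have hsum : 2 * (c * ∑' v, h v) ≤ 2 * ∑' v, f v := by
    calc 2 * (c * ∑' v, h v) = ∑' v, 2 * (c * h v) := by
          rw [ENNReal.tsum_mul_left, ENNReal.tsum_mul_left]
      _ ≤ ∑' v, (f v + g v) := ENNReal.tsum_le_tsum hpt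
      _ = (∑' v, f v) + ∑' v, g v := ENNReal.tsum_add
      _ = 2 * ∑' v, f v := by rw [hfg, two_mul]
  exact (ENNReal.mul_le_mul_iff_right two_ne_zero ENNReal.ofNat_ne_top).mp hsum
end

section
/- Let E be a real inner product space of dimension n, let λ > 0, and let L ⊆ E be a ℤ-lattice such that every nonzero element of L has norm ≥ λ. Then ∑_{v ∈ L, v ≠ 0} exp(−π‖v‖²) ≤ 3ⁿ · (πλ²)^{−n/2} · ∫_{πλ²}^{∞} u^{n/2} e^{−u} du. -/
open Real

open MeasureTheory Metric Finset in
/-- Packing bound: a finite set of points in the ball of radius `r`, pairwise at distance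
at least `lam`, with `0 < lam ≤ r`, has at most `(3r/lam)^n` elements. -/
lemma packing_card_bound {E : Type*} [NormedAddCommGroup E] [InnerProductSpace ℝ E]
    [FiniteDimensional ℝ E] {n : ℕ} (hdim : Module.finrank ℝ E = n)
    {lam r : ℝ} (hlam : 0 < lam) (hr : lam ≤ r) (G : Finset E)
    (hGr : ∀ x ∈ G, ‖x‖ ≤ r)
    (hGd : ∀ x ∈ G, ∀ y ∈ G, x ≠ y → lam ≤ dist x y) :
    (G.card : ℝ) ≤ (3 * r / lam) ^ n := by
  rcases Nat.eq_zero_or_pos n with hn | hn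
  · subst hn
    have : Subsingleton E := Module.finrank_zero_iff.1 hdim
    have : G.card ≤ 1 := Finset.card_le_one.2 (fun a _ b _ => Subsingleton.elim a b)
    simpa using (by exact_mod_cast this : (G.card : ℝ) ≤ 1)
  · have : Nontrivial E := Module.nontrivial_of_finrank_pos (R := ℝ) (by omega)
    borelize E
    have hr0 : 0 < r := lt_of_lt_of_le hlam hr
    set c : ENNReal := volume (ball (0 : E) 1) with hcdef
    have hc0 : c ≠ 0 := (measure_ball_pos _ _ one_pos).ne'
    have hctop : c ≠ ⊤ := measure_ball_lt_top.ne
    have hball : ∀ x : E, volume (ball x (lam / 2)) = ENNReal.ofReal ((lam / 2) ^ n) * c := by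
      intro x
      rw [Measure.addHaar_ball volume x (by positivity : (0 : ℝ) ≤ lam / 2), hdim]
    have hdisj : (G : Set E).PairwiseDisjoint (fun x => ball x (lam / 2)) := by
      intro x hx y hy hxy
      exact ball_disjoint_ball (by linarith [hGd x hx y hy hxy])
    have hsub : ∀ x ∈ G, ball x (lam / 2) ⊆ closedBall (0 : E) (3 * r / 2) := by
      intro x hx z hz
      rw [mem_ball] at hz
      rw [mem_closedBall, dist_zero_right]
      have h1 : ‖z - x‖ < lam / 2 := by rwa [← dist_eq_norm]
      have h2 : ‖z‖ ≤ ‖z - x‖ + ‖x‖ := by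
        simpa using norm_add_le (z - x) x
      have := hGr x hx
      linarith
    have key : (G.card : ENNReal) * (ENNReal.ofReal ((lam / 2) ^ n) * c) ≤
        ENNReal.ofReal ((3 * r / 2) ^ n) * c := by
      calc (G.card : ENNReal) * (ENNReal.ofReal ((lam / 2) ^ n) * c)
          = ∑ x ∈ G, volume (ball x (lam / 2)) := by
            simp [hball, Finset.sum_const, nsmul_eq_mul]
        _ = volume (⋃ x ∈ G, ball x (lam / 2)) :=
            (measure_biUnion_finset hdisj (fun _ _ => measurableSet_ball)).symm
        _ ≤ volume (closedBall (0 : E) (3 * r / 2)) :=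
            measure_mono (Set.iUnion₂_subset hsub)
        _ = ENNReal.ofReal ((3 * r / 2) ^ n) * c := by
            rw [Measure.addHaar_closedBall volume _ (by positivity : (0 : ℝ) ≤ 3 * r / 2), hdim]
    have key2 : (G.card : ℝ) * (lam / 2) ^ n ≤ (3 * r / 2) ^ n := by
      have h1 : ENNReal.ofReal ((G.card : ℝ) * (lam / 2) ^ n) ≤
          ENNReal.ofReal ((3 * r / 2) ^ n) := by
        rw [ENNReal.ofReal_mul (by positivity), ENNReal.ofReal_natCast]
        exact (ENNReal.mul_le_mul_iff_left hc0 hctop).1 (by rw [mul_assoc]; exact key)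
      have := (ENNReal.ofReal_le_ofReal_iff (by positivity)).1 h1
      calc (G.card : ℝ) * (lam / 2) ^ n ≤
          max ((G.card : ℝ) * (lam / 2) ^ n) 0 := le_max_left _ _
        _ ≤ (3 * r / 2) ^ n := by
            rcases le_total ((G.card : ℝ) * (lam / 2) ^ n) 0 with h | h
            · simp only [max_eq_right h]; positivity
            · simpa [max_eq_left h] using this
    have hpow : (0 : ℝ) < (lam / 2) ^ n := by positivity
    rw [← le_div_iff₀ hpow] at key2
    calc (G.card : ℝ) ≤ (3 * r / 2) ^ n / (lam / 2) ^ n := key2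
      _ = (3 * r / lam) ^ n := by
          rw [← div_pow]
          congr 1
          field_simp

/-- Bost's bound for the theta sum over the nonzero points of a lattice with first
minimum at least `λ`. -/
theorem theta_first_minimum_bound
    {E : Type*} [NormedAddCommGroup E] [InnerProductSpace ℝ E] [FiniteDimensional ℝ E]
    {n : ℕ} (hdim : Module.finrank ℝ E = n)
    (lam : ℝ) (hlam : 0 < lam)
    (L : Submodule ℤ E) [DiscreteTopology L] [IsZLattice ℝ L]
    (hmin : ∀ v ∈ L, v ≠ 0 → lam ≤ ‖v‖) :
    ∑' v : {v : E // v ∈ L ∧ v ≠ 0}, Real.exp (-π * ‖(v : E)‖ ^ 2) ≤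
      3 ^ n * (π * lam ^ 2) ^ (-(n : ℝ) / 2) *
        ∫ u in Set.Ioi (π * lam ^ 2), u ^ ((n : ℝ) / 2) * Real.exp (-u) := by
  classical
  set cc : ℝ := π * lam ^ 2 with hcc
  have hcc0 : 0 < cc := by positivity
  have hRHSint : MeasureTheory.IntegrableOn (fun u : ℝ => u ^ ((n : ℝ) / 2) * Real.exp (-u))
      (Set.Ioi cc) := by
    have h := Real.GammaIntegral_convergent (s := (n : ℝ) / 2 + 1) (by positivity)
    have h2 : ((n : ℝ) / 2 + 1) - 1 = (n : ℝ) / 2 := by ring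
    rw [h2] at h
    exact (h.mono_set (Set.Ioi_subset_Ioi hcc0.le)).congr_fun
      (fun x hx => mul_comm _ _) measurableSet_Ioi
  have hIntNonneg : 0 ≤ ∫ u in Set.Ioi cc, u ^ ((n : ℝ) / 2) * Real.exp (-u) :=
    MeasureTheory.setIntegral_nonneg measurableSet_Ioi (fun u hu => by
      have hu0 : (0:ℝ) < u := lt_trans hcc0 hu
      positivity)
  refine tsum_le_of_sum_le' (mul_nonneg (by positivity) hIntNonneg) ?_
  intro F
  set a : {v : E // v ∈ L ∧ v ≠ 0} → ℝ := fun v => π * ‖(v : E)‖ ^ 2 with ha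
  have hav : ∀ v, cc ≤ a v := by
    intro v
    have h := hmin v v.2.1 v.2.2
    have h2 : lam ^ 2 ≤ ‖(v : E)‖ ^ 2 := pow_le_pow_left₀ hlam.le h 2
    have := pi_pos
    simp only [ha, hcc]
    nlinarith
  set g : {v : E // v ∈ L ∧ v ≠ 0} → ℝ → ℝ :=
    fun v u => Set.indicator (Set.Ici (a v)) (fun u => Real.exp (-u)) u with hg
  have hexpInt : MeasureTheory.IntegrableOn (fun u : ℝ => Real.exp (-u)) (Set.Ioi cc) := by
    simpa using exp_neg_integrableOn_Ioi cc (by norm_num : (0:ℝ) < 1)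
  have hgint : ∀ v, MeasureTheory.IntegrableOn (g v) (Set.Ioi cc) :=
    fun v => hexpInt.indicator measurableSet_Ici
  have hA : ∀ v, Real.exp (-(a v)) ≤ ∫ u in Set.Ioi cc, g v u := by
    intro v
    have h1 : ∫ u in Set.Ioi (a v), Real.exp (-u) = Real.exp (-(a v)) :=
      integral_exp_neg_Ioi (a v)
    have hsub : Set.Ioi (a v) ⊆ Set.Ioi cc := Set.Ioi_subset_Ioi (hav v)
    have h2 : (∫ u in Set.Ioi cc,
        Set.indicator (Set.Ioi (a v)) (fun u => Real.exp (-u)) u)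
        = ∫ u in Set.Ioi (a v), Real.exp (-u) := by
      rw [MeasureTheory.setIntegral_indicator measurableSet_Ioi,
        Set.inter_eq_self_of_subset_right hsub]
    rw [← h1, ← h2]
    apply MeasureTheory.setIntegral_mono_on
      (hexpInt.indicator measurableSet_Ioi) (hgint v) measurableSet_Ioi
    intro u hu
    by_cases h : u ∈ Set.Ioi (a v)
    · have h' : u ∈ Set.Ici (a v) := Set.mem_Ici.2 (le_of_lt (Set.mem_Ioi.1 h))
      simp [hg, Set.indicator_of_mem, h, h']
    · rw [Set.indicator_of_notMem h]
      exact Set.indicator_nonneg (fun x _ => (Real.exp_pos _).le) u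
  calc ∑ v ∈ F, Real.exp (-π * ‖(v : E)‖ ^ 2)
      ≤ ∑ v ∈ F, ∫ u in Set.Ioi cc, g v u := by
        apply Finset.sum_le_sum
        intro v _
        simpa [ha, neg_mul] using hA v
    _ = ∫ u in Set.Ioi cc, ∑ v ∈ F, g v u :=
        (MeasureTheory.integral_finset_sum F (fun v _ => hgint v)).symm
    _ ≤ ∫ u in Set.Ioi cc,
          3 ^ n * cc ^ (-(n : ℝ) / 2) * (u ^ ((n : ℝ) / 2) * Real.exp (-u)) := by
        apply MeasureTheory.setIntegral_mono_on
          (MeasureTheory.integrable_finset_sum F (fun v _ => hgint v))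
          (hRHSint.const_mul _) measurableSet_Ioi
        intro u hu
        have hu' : cc < u := hu
        have hu0 : (0:ℝ) < u := hcc0.trans hu'
        set r : ℝ := Real.sqrt (u / π) with hrdef
        have hlr : lam ≤ r := by
          rw [hrdef, Real.le_sqrt hlam.le (by positivity), le_div_iff₀ pi_pos]
          nlinarith
        have hsum : ∑ v ∈ F, g v u
            = ((F.filter (fun v => a v ≤ u)).card : ℝ) * Real.exp (-u) := by
          have hterm : ∀ v ∈ F, g v u = if a v ≤ u then Real.exp (-u) else 0 := by
            intro v _
            simp [hg, Set.indicator_apply, Set.mem_Ici]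
          rw [Finset.sum_congr rfl hterm, ← Finset.sum_filter, Finset.sum_const,
            nsmul_eq_mul]
        have hcard : ((F.filter (fun v => a v ≤ u)).card : ℝ) ≤ (3 * r / lam) ^ n := by
          have himg : ((F.filter (fun v => a v ≤ u)).image
              Subtype.val).card = (F.filter (fun v => a v ≤ u)).card :=
            Finset.card_image_of_injective _ Subtype.val_injective
          rw [← himg]
          apply packing_card_bound hdim hlam hlr
          · intro x hx
            obtain ⟨v, hv, rfl⟩ := Finset.mem_image.1 hx
            have hau : a v ≤ u := (Finset.mem_filter.1 hv).2
            have h1 : ‖(v : E)‖ ^ 2 ≤ u / π := by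
              rw [le_div_iff₀ pi_pos]
              simp only [ha] at hau
              nlinarith
            calc ‖(v : E)‖ = Real.sqrt (‖(v : E)‖ ^ 2) :=
                  (Real.sqrt_sq (norm_nonneg _)).symm
              _ ≤ r := Real.sqrt_le_sqrt h1
          · intro x hx y hy hxy
            obtain ⟨vx, hvx, rfl⟩ := Finset.mem_image.1 hx
            obtain ⟨vy, hvy, rfl⟩ := Finset.mem_image.1 hy
            have hmem : (vx : E) - (vy : E) ∈ L := Submodule.sub_mem L vx.2.1 vy.2.1
            have hne : (vx : E) - (vy : E) ≠ 0 := sub_ne_zero.2 hxy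
            rw [dist_eq_norm]
            exact hmin _ hmem hne
        have hform : (3 * r / lam) ^ n
            = 3 ^ n * cc ^ (-(n : ℝ) / 2) * u ^ ((n : ℝ) / 2) := by
          have hrl0 : (0:ℝ) ≤ r / lam := div_nonneg (Real.sqrt_nonneg _) hlam.le
          have hsq : (r / lam) ^ 2 = u / cc := by
            rw [div_pow, hrdef, Real.sq_sqrt (by positivity : (0:ℝ) ≤ u / π), hcc]
            field_simp
          have h1 : r / lam = Real.sqrt (u / cc) := by
            rw [← hsq, Real.sqrt_sq hrl0]
          have h2 : Real.sqrt (u / cc) ^ n = u ^ ((n : ℝ) / 2) * cc ^ (-(n : ℝ) / 2) := by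
            rw [Real.sqrt_eq_rpow, ← Real.rpow_natCast ((u / cc) ^ ((1:ℝ)/2)) n,
              ← Real.rpow_mul (by positivity), show (1/2 : ℝ) * n = (n : ℝ)/2 by ring,
              Real.div_rpow hu0.le hcc0.le, div_eq_mul_inv,
              ← Real.rpow_neg hcc0.le, neg_div]
          calc (3 * r / lam) ^ n = 3 ^ n * (r / lam) ^ n := by
                rw [mul_div_assoc, mul_pow]
            _ = 3 ^ n * cc ^ (-(n : ℝ) / 2) * u ^ ((n : ℝ) / 2) := by
                rw [h1, h2]; ring
        calc ∑ v ∈ F, g v u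
            = ((F.filter (fun v => a v ≤ u)).card : ℝ) * Real.exp (-u) := hsum
          _ ≤ (3 * r / lam) ^ n * Real.exp (-u) :=
              mul_le_mul_of_nonneg_right hcard (Real.exp_pos _).le
          _ = 3 ^ n * cc ^ (-(n : ℝ) / 2) * (u ^ ((n : ℝ) / 2) * Real.exp (-u)) := by
              rw [hform]; ring
    _ = 3 ^ n * cc ^ (-(n : ℝ) / 2) *
          ∫ u in Set.Ioi cc, u ^ ((n : ℝ) / 2) * Real.exp (-u) := by
        rw [MeasureTheory.integral_const_mul]
end

section
/- Let n be a natural number and a a real number with 2a > n. Then ∫_{a}^{∞} u^{n/2} e^{−u} du ≤ a^{n/2} · (1 − n/(2a))^{−1} · e^{−a}. -/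
set_option maxHeartbeats 1000000


open Real

/-- Bost's Lemma 2.6.4: bound for the incomplete Gamma integral. -/
theorem incomplete_gamma_bound (n : ℕ) (a : ℝ) (ha : (n : ℝ) < 2 * a) :
    ∫ u in Set.Ioi a, u ^ ((n : ℝ) / 2) * Real.exp (-u) ≤
      a ^ ((n : ℝ) / 2) * (1 - (n : ℝ) / (2 * a))⁻¹ * Real.exp (-a) := by
  have hn0 : (0:ℝ) ≤ n := Nat.cast_nonneg n
  have ha0 : 0 < a := by linarith
  set s : ℝ := (n : ℝ) / 2 with hs
  have hs0 : 0 ≤ s := by positivity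
  set c : ℝ := s / a with hc
  have hc0 : 0 ≤ c := by positivity
  have hc1 : c < 1 := by
    rw [hc, div_lt_one ha0]; simp only [hs]; linarith
  set b : ℝ := 1 - c with hb
  have hb0 : 0 < b := by linarith
  -- pointwise bound
  have key : ∀ u ∈ Set.Ioi a, u ^ s * Real.exp (-u)
      ≤ (a ^ s * Real.exp (-(c * a))) * Real.exp (-(b * u)) := by
    intro u hu
    have hua : a < u := hu
    have hu0 : 0 < u := lt_trans ha0 hua
    have hlog : Real.log (u / a) ≤ u / a - 1 :=
      Real.log_le_sub_one_of_pos (by positivity)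
    have hlog' : Real.log u - Real.log a ≤ u / a - 1 := by
      rwa [← Real.log_div (ne_of_gt hu0) (ne_of_gt ha0)]
    have hkey : s * Real.log u - u ≤ s * Real.log a - (c * a) - (b * u) := by
      have h1 : s * (Real.log u - Real.log a) ≤ c * (u - a) := by
        have := mul_le_mul_of_nonneg_left hlog' hs0
        calc s * (Real.log u - Real.log a) ≤ s * (u / a - 1) := this
          _ = c * (u - a) := by rw [hc]; field_simp
      have : c * a + b * u = u - c * (u - a) := by rw [hb]; ring
      linarith
    calc u ^ s * Real.exp (-u)
        = Real.exp (s * Real.log u - u) := by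
          rw [Real.rpow_def_of_pos hu0, ← Real.exp_add]; ring_nf
      _ ≤ Real.exp (s * Real.log a - (c * a) - (b * u)) := Real.exp_le_exp.mpr hkey
      _ = (a ^ s * Real.exp (-(c * a))) * Real.exp (-(b * u)) := by
          rw [Real.rpow_def_of_pos ha0, ← Real.exp_add, ← Real.exp_add]; ring_nf
  -- integrability of LHS
  have hint : MeasureTheory.IntegrableOn (fun u => u ^ s * Real.exp (-u)) (Set.Ioi a) := by
    have h := (Real.GammaIntegral_convergent (s := s + 1) (by positivity)).mono_set
      (Set.Ioi_subset_Ioi ha0.le)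
    refine h.congr_fun (fun x hx => ?_) measurableSet_Ioi
    simp only [add_sub_cancel_right]
    ring
  -- integrability of RHS integrand
  have hint2 : MeasureTheory.IntegrableOn
      (fun u => (a ^ s * Real.exp (-(c * a))) * Real.exp (-(b * u))) (Set.Ioi a) := by
    have h := (exp_neg_integrableOn_Ioi a hb0).const_mul (a ^ s * Real.exp (-(c * a)))
    simpa [neg_mul, MeasureTheory.IntegrableOn] using h
  have hmono : (∫ u in Set.Ioi a, u ^ s * Real.exp (-u)) ≤
      ∫ u in Set.Ioi a, (a ^ s * Real.exp (-(c * a))) * Real.exp (-(b * u)) :=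
    MeasureTheory.setIntegral_mono_on hint hint2 measurableSet_Ioi key
  have hval : ∫ u in Set.Ioi a, (a ^ s * Real.exp (-(c * a))) * Real.exp (-(b * u))
      = a ^ s * b⁻¹ * Real.exp (-a) := by
    rw [MeasureTheory.integral_const_mul]
    have := MeasureTheory.integral_comp_mul_left_Ioi (fun x => Real.exp (-x)) a hb0
    simp only [smul_eq_mul] at this
    rw [this, integral_exp_neg_Ioi]
    have hsum : Real.exp (-(c * a)) * Real.exp (-(b * a)) = Real.exp (-a) := by
      rw [← Real.exp_add]; congr 1; rw [hb]; ring
    calc a ^ s * Real.exp (-(c * a)) * (b⁻¹ * Real.exp (-(b * a)))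
        = a ^ s * b⁻¹ * (Real.exp (-(c * a)) * Real.exp (-(b * a))) := by ring
      _ = a ^ s * b⁻¹ * Real.exp (-a) := by rw [hsum]
  have hrhs : a ^ s * (1 - (n:ℝ) / (2 * a))⁻¹ * Real.exp (-a)
      = a ^ s * b⁻¹ * Real.exp (-a) := by
    have : 1 - (n:ℝ) / (2 * a) = b := by
      rw [hb, hc, hs]; field_simp
    rw [this]
  rw [hrhs]
  calc ∫ u in Set.Ioi a, u ^ s * Real.exp (-u)
      ≤ _ := hmono
    _ = a ^ s * b⁻¹ * Real.exp (-a) := hval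
end
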